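/- Let -∞ ≤ a < b ≤ ∞, let α > 0, let n ∈ ℤ, let {x_k}_{k=n}^∞ ⊂ (a,b) be a strictly increasing sequence, let {τ_k}_{k=n+1}^∞ be a geometrically decreasing sequence of positive numbers (i.e. sup_{k≥n+1} τ_{k+1}/τ_k < 1), and let {σ_k}_{k=n}^∞ be a positive nondecreasing sequence. Then there exist positive constants c₁, c₂ (depending only on α and the geometric decay ratio) such that for every nonnegative measurable function g on (a,b): c₁ · sup_{k≥n+1} τ_k (∫_{x_{k-1}}^{x_k} g)^α σ_{k-1} ≤ sup_{k≥n+1} τ_k · sup_{n≤i<k} (∫_{x_i}^{x_k} g)^α σ_i ≤ c₂ · sup_{k≥n+1} τ_k (∫_{x_{k-1}}^{x_k} g)^α σ_{k-1}. -/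

import Mathlib

open MeasureTheory ENNReal Set

noncomputable section

/-- The open interval `(a, b)` of real numbers, with extended-real endpoints. -/
def Iab (a b : EReal) : Set ℝ := {x : ℝ | a < (x : EReal) ∧ (x : EReal) < b}

/-!
The lower bound is the choice `i = k - 1`. For the upper bound let `A` be the supremum over
single steps. If `n ≤ i < j ≤ k`, then `τ k ≤ ρ ^ (k - j) τ j` and `σ i ≤ σ (j - 1)` give
`τ k σ i (∫_{x (j-1)}^{x j} g) ^ α ≤ ρ ^ (k - j) A`. Taking `α`-th roots and summing over
`j ∈ (i, k]` bounds `(τ k σ i) ^ (1/α) ∫_{x i}^{x k} g` by a geometric series in `ρ ^ (1/α)`,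
so `c₂ = (1 - ρ ^ (1/α)) ^ (-α)` works.
-/

lemma le_pow_toNat_sub_mul_of_le_mul_succ {u : ℤ → ℝ≥0∞} {ρ : ℝ≥0∞} {m : ℤ}
    (hu : ∀ k, m ≤ k → u (k + 1) ≤ ρ * u k) {j k : ℤ} (hj : m ≤ j) (hjk : j ≤ k) :
    u k ≤ ρ ^ (k - j).toNat * u j := by
  induction k, hjk using Int.leInduction with
  | base => simp
  | succ k hjk ih =>
    calc u (k + 1) ≤ ρ * u k := hu k (by omega)
      _ ≤ ρ * (ρ ^ (k - j).toNat * u j) := by gcongr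
      _ = ρ ^ (k + 1 - j).toNat * u j := by
        rw [show (k + 1 - j).toNat = (k - j).toNat + 1 by omega, pow_succ']; ring

lemma sum_Ioc_le_of_le_pow_toNat_sub_mul {I : ℤ → ℝ≥0∞} {r B : ℝ≥0∞} {i k : ℤ}
    (hI : ∀ j ∈ Finset.Ioc i k, I j ≤ r ^ (k - j).toNat * B) :
    ∑ j ∈ Finset.Ioc i k, I j ≤ (1 - r)⁻¹ * B := by
  have hinj : InjOn (fun j => (k - j).toNat) (Finset.Ioc i k : Set ℤ) := by
    intro j hj j' hj' h
    simp only [Finset.coe_Ioc, mem_Ioc] at hj hj'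
    simp only at h
    omega
  calc ∑ j ∈ Finset.Ioc i k, I j
      ≤ ∑ j ∈ Finset.Ioc i k, r ^ (k - j).toNat * B := Finset.sum_le_sum hI
    _ = (∑ p ∈ (Finset.Ioc i k).image (fun j => (k - j).toNat), r ^ p) * B := by
      rw [Finset.sum_image hinj, Finset.sum_mul]
    _ ≤ (∑' p, r ^ p) * B := by gcongr; exact ENNReal.sum_le_tsum _
    _ = (1 - r)⁻¹ * B := by rw [ENNReal.tsum_geometric]

lemma setLIntegral_Ioc_le_sum {β : Type*} [LinearOrder β] [MeasurableSpace β] (μ : Measure β)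
    (f : β → ℝ≥0∞) (x : ℤ → β) {i k : ℤ} (hik : i ≤ k) :
    ∫⁻ s in Ioc (x i) (x k), f s ∂μ ≤
      ∑ j ∈ Finset.Ioc i k, ∫⁻ s in Ioc (x (j - 1)) (x j), f s ∂μ := by
  induction k, hik using Int.leInduction with
  | base => simp
  | succ k hik ih =>
    rw [← Finset.insert_Ioc_right_eq_Ioc_add_one hik, Finset.sum_insert (by simp),
      add_sub_cancel_right]
    calc ∫⁻ s in Ioc (x i) (x (k + 1)), f s ∂μ
        ≤ ∫⁻ s in Ioc (x i) (x k) ∪ Ioc (x k) (x (k + 1)), f s ∂μ :=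
          lintegral_mono_set Ioc_subset_Ioc_union_Ioc
      _ ≤ (∫⁻ s in Ioc (x i) (x k), f s ∂μ) + ∫⁻ s in Ioc (x k) (x (k + 1)), f s ∂μ :=
          lintegral_union_le _ _ _
      _ ≤ (∑ j ∈ Finset.Ioc i k, ∫⁻ s in Ioc (x (j - 1)) (x j), f s ∂μ) +
          ∫⁻ s in Ioc (x k) (x (k + 1)), f s ∂μ := by gcongr
      _ = _ := add_comm _ _

lemma setLIntegral_Ioo_le_sum {β : Type*} [LinearOrder β] [MeasurableSpace β] (μ : Measure β)
    [NullSingletonClass μ] (f : β → ℝ≥0∞) (x : ℤ → β) {i k : ℤ} (hik : i ≤ k) :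
    ∫⁻ s in Ioo (x i) (x k), f s ∂μ ≤
      ∑ j ∈ Finset.Ioc i k, ∫⁻ s in Ioo (x (j - 1)) (x j), f s ∂μ := by
  simp only [setLIntegral_congr Ioo_ae_eq_Ioc]
  exact setLIntegral_Ioc_le_sum μ f x hik

lemma mul_rpow_le_iff_rpow_inv_mul_le {α : ℝ} (hα : 0 < α) (a y z : ℝ≥0∞) :
    a * y ^ α ≤ z ↔ a ^ α⁻¹ * y ≤ z ^ α⁻¹ := by
  rw [← ENNReal.rpow_le_rpow_iff (inv_pos.2 hα), ENNReal.mul_rpow_of_nonneg _ _ (by positivity),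
    ENNReal.rpow_rpow_inv hα.ne']

namespace DiscreteHardy

variable (α : ℝ) (n : ℤ) (x : ℤ → ℝ) (τ σ : ℤ → ℝ≥0∞) (g : ℝ → ℝ≥0∞)

def stepSup : ℝ≥0∞ :=
  ⨆ (k : ℤ) (_ : n + 1 ≤ k), τ k * ((∫⁻ s in Ioo (x (k - 1)) (x k), g s) ^ α * σ (k - 1))

def chordSup : ℝ≥0∞ :=
  ⨆ (k : ℤ) (_ : n + 1 ≤ k), τ k * ⨆ (i : ℤ) (_ : n ≤ i ∧ i < k),
    (∫⁻ s in Ioo (x i) (x k), g s) ^ α * σ i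

variable {α n x τ σ}

lemma stepSup_le_chordSup : stepSup α n x τ σ g ≤ chordSup α n x τ σ g :=
  iSup₂_mono fun k hk => by
    gcongr
    exact le_iSup₂_of_le (k - 1) ⟨by omega, by omega⟩ le_rfl

variable {ρ : ℝ≥0∞} (hα : 0 < α) (hτ : ∀ k, n + 1 ≤ k → τ (k + 1) ≤ ρ * τ k)
  (hσ : ∀ k, n ≤ k → σ k ≤ σ (k + 1))
include hα hτ hσ

lemma rpow_inv_mul_step_le {i j k : ℤ} (hi : n ≤ i) (hij : i < j) (hjk : j ≤ k) :
    (τ k * σ i) ^ α⁻¹ * ∫⁻ s in Ioo (x (j - 1)) (x j), g s ≤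
      (ρ ^ α⁻¹) ^ (k - j).toNat * stepSup α n x τ σ g ^ α⁻¹ := by
  set m := (k - j).toNat
  have hstep : τ j * ((∫⁻ s in Ioo (x (j - 1)) (x j), g s) ^ α * σ (j - 1)) ≤
      stepSup α n x τ σ g :=
    le_iSup₂_of_le j (by omega) le_rfl
  have key : τ k * σ i * (∫⁻ s in Ioo (x (j - 1)) (x j), g s) ^ α ≤
      ρ ^ m * stepSup α n x τ σ g :=
    calc τ k * σ i * (∫⁻ s in Ioo (x (j - 1)) (x j), g s) ^ α
        ≤ ρ ^ m * τ j * σ (j - 1) * (∫⁻ s in Ioo (x (j - 1)) (x j), g s) ^ α := by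
          gcongr
          · exact le_pow_toNat_sub_mul_of_le_mul_succ hτ (by omega) hjk
          · exact monotoneOn_of_le_add_one ordConnected_Ici (fun a _ ha _ => hσ a ha) hi
              (show n ≤ j - 1 by omega) (by omega)
      _ = ρ ^ m * (τ j * ((∫⁻ s in Ioo (x (j - 1)) (x j), g s) ^ α * σ (j - 1))) := by ring
      _ ≤ ρ ^ m * stepSup α n x τ σ g := by gcongr
  refine ((mul_rpow_le_iff_rpow_inv_mul_le hα _ _ _).1 key).trans_eq ?_
  rw [ENNReal.mul_rpow_of_nonneg _ _ (by positivity), ← ENNReal.rpow_natCast, ← ENNReal.rpow_mul,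
    mul_comm (m : ℝ), ENNReal.rpow_mul, ENNReal.rpow_natCast]

lemma mul_chord_le {i k : ℤ} (hi : n ≤ i) (hik : i < k) :
    τ k * ((∫⁻ s in Ioo (x i) (x k), g s) ^ α * σ i) ≤
      ((1 - ρ ^ α⁻¹)⁻¹) ^ α * stepSup α n x τ σ g := by
  rw [mul_left_comm, mul_comm, mul_rpow_le_iff_rpow_inv_mul_le hα,
    ENNReal.mul_rpow_of_nonneg ((1 - ρ ^ α⁻¹)⁻¹ ^ α) _ (by positivity),
    ENNReal.rpow_rpow_inv hα.ne']
  calc (τ k * σ i) ^ α⁻¹ * ∫⁻ s in Ioo (x i) (x k), g s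
      ≤ (τ k * σ i) ^ α⁻¹ * ∑ j ∈ Finset.Ioc i k, ∫⁻ s in Ioo (x (j - 1)) (x j), g s := by
        gcongr
        exact setLIntegral_Ioo_le_sum volume g x hik.le
    _ = ∑ j ∈ Finset.Ioc i k, (τ k * σ i) ^ α⁻¹ * ∫⁻ s in Ioo (x (j - 1)) (x j), g s :=
        Finset.mul_sum _ _ _
    _ ≤ (1 - ρ ^ α⁻¹)⁻¹ * stepSup α n x τ σ g ^ α⁻¹ :=
        sum_Ioc_le_of_le_pow_toNat_sub_mul fun j hj => by
          rw [Finset.mem_Ioc] at hj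
          exact rpow_inv_mul_step_le g hα hτ hσ hi hj.1 hj.2

lemma chordSup_le :
    chordSup α n x τ σ g ≤ ((1 - ρ ^ α⁻¹)⁻¹) ^ α * stepSup α n x τ σ g :=
  iSup₂_le fun k _ => by
    simp only [ENNReal.mul_iSup]
    exact iSup₂_le fun i hi => mul_chord_le g hα hτ hσ hi.1 hi.2

end DiscreteHardy

open DiscreteHardy in
theorem statement11 (α : ℝ) (hα : 0 < α) (ρ : ℝ≥0∞) (hρ : ρ < 1) :
    ∃ c₁ c₂ : ℝ≥0∞, 0 < c₁ ∧ c₂ < ∞ ∧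
      ∀ (a b : EReal), a < b →
      ∀ (n : ℤ) (x : ℤ → ℝ) (τ σ : ℤ → ℝ≥0∞),
        (∀ k, n ≤ k → x k ∈ Iab a b) →
        (∀ k, n ≤ k → x k < x (k + 1)) →
        (∀ k, n + 1 ≤ k → 0 < τ k ∧ τ k < ∞) →
        (∀ k, n + 1 ≤ k → τ (k + 1) ≤ ρ * τ k) →
        (∀ k, n ≤ k → 0 < σ k ∧ σ k < ∞) →
        (∀ k, n ≤ k → σ k ≤ σ (k + 1)) →
        ∀ g : ℝ → ℝ≥0∞, Measurable g →
          c₁ * (⨆ (k : ℤ) (_ : n + 1 ≤ k),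
                τ k * ((∫⁻ s in Ioo (x (k - 1)) (x k), g s) ^ α * σ (k - 1))) ≤
              (⨆ (k : ℤ) (_ : n + 1 ≤ k),
                τ k * ⨆ (i : ℤ) (_ : n ≤ i ∧ i < k),
                  (∫⁻ s in Ioo (x i) (x k), g s) ^ α * σ i) ∧
            (⨆ (k : ℤ) (_ : n + 1 ≤ k),
                τ k * ⨆ (i : ℤ) (_ : n ≤ i ∧ i < k),
                  (∫⁻ s in Ioo (x i) (x k), g s) ^ α * σ i) ≤
              c₂ * ⨆ (k : ℤ) (_ : n + 1 ≤ k),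
                τ k * ((∫⁻ s in Ioo (x (k - 1)) (x k), g s) ^ α * σ (k - 1)) := by
  have hr : ρ ^ α⁻¹ < 1 := ENNReal.rpow_lt_one hρ (by positivity)
  refine ⟨1, ((1 - ρ ^ α⁻¹)⁻¹) ^ α, one_pos,
    ENNReal.rpow_lt_top_of_nonneg hα.le (ENNReal.inv_ne_top.2 (tsub_pos_of_lt hr).ne'), ?_⟩
  intro a b _ n x τ σ _ _ _ hτ _ hσ g _
  exact ⟨(one_mul _).trans_le (stepSup_le_chordSup g), chordSup_le g hα hτ hσ⟩
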